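/- arXiv:2310.00817 — 5 statements merged into one kernel-verified Lean document; each statement's English description precedes it below -/
import Mathlib

section
/- Monotonicity of the optimal human–machine value in the adherence level: let θ1, θ2 : S×A → [0,1] be two adherence levels such that θ1(s,a) ≥ θ2(s,a) for all (s,a) ∈ S×A, and assume in addition that θ2(s,a) ≥ π^H_h(a|s) for all h ∈ {1,…,H}, s ∈ S, a ∈ A. Writing V*_h(s|θ) for the optimal value computed with adherence level θ (all other data p, r, π^H fixed), it holds that V*_h(s|θ1) ≥ V*_h(s|θ2) for every state s ∈ S and every stage h ∈ {1,…,H}. -/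
open Finset

noncomputable section

variable {S A B : Type*}

/-- Human action distribution `ℙ_h(a|s,a^M)` given machine advice (`none` = defer). -/
def Pact [DecidableEq A] (piH : ℕ → S → A → ℝ) (θ : S → A → ℝ)
    (h : ℕ) (s : S) (aM : Option A) (a : A) : ℝ :=
  match aM with
  | Option.none => piH h s a
  | Option.some b => if a = b then θ s b else (1 - θ s b) * piH h s a / (1 - piH h s b)

/-- Machine transition kernel `p^M_h(s'|s,a^M)`. -/
def pM [Fintype A] [DecidableEq A] (p : ℕ → S → A → S → ℝ) (piH : ℕ → S → A → ℝ)
    (θ : S → A → ℝ) (h : ℕ) (s : S) (aM : Option A) (s' : S) : ℝ :=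
  ∑ a : A, p h s a s' * Pact piH θ h s aM a

/-- Machine reward `r^M_h(s,a^M)`. -/
def rM [Fintype A] [DecidableEq A] (r : ℕ → S → A → ℝ) (piH : ℕ → S → A → ℝ)
    (θ : S → A → ℝ) (h : ℕ) (s : S) (aM : Option A) : ℝ :=
  ∑ a : A, r h s a * Pact piH θ h s aM a

/-- Indicator of advising (`a^M ≠ defer`). -/
def indAdv : Option A → ℝ := fun aM => match aM with
  | Option.none => 0
  | Option.some _ => 1

/-- The β-penalized machine reward `r^M_{h,β}(s,a) = r^M_h(s,a) − β·1{a ≠ defer}`. -/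
def rMpen [Fintype A] [DecidableEq A] (r : ℕ → S → A → ℝ) (piH : ℕ → S → A → ℝ)
    (θ : S → A → ℝ) (β : ℝ) (h : ℕ) (s : S) (aM : Option A) : ℝ :=
  rM r piH θ h s aM - β * indAdv aM

/-- The always-defer policy. -/
def deferPol : ℕ → S → Option A := fun _ _ => Option.none

/-- Value with `k` remaining steps starting at stage `h`. -/
def Vfuel [Fintype S] (P : ℕ → S → B → S → ℝ) (R : ℕ → S → B → ℝ)
    (pol : ℕ → S → B) : ℕ → ℕ → S → ℝ
  | _, 0, _ => 0
  | h, k + 1, s =>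
      R h s (pol h s) + ∑ s' : S, P h s (pol h s) s' * Vfuel P R pol (h + 1) k s'

/-- Value function `V^π_h(s)` of a deterministic Markov policy with horizon `H`:
`V^π_{H+1} = 0` and `V^π_h(s) = R_h(s,π_h(s)) + Σ_{s'} P_h(s'|s,π_h(s)) V^π_{h+1}(s')`. -/
def Vval [Fintype S] (H : ℕ) (P : ℕ → S → B → S → ℝ) (R : ℕ → S → B → ℝ)
    (pol : ℕ → S → B) (h : ℕ) (s : S) : ℝ :=
  Vfuel P R pol h (H + 1 - h) s

/-- Optimal value function: supremum over deterministic Markov policies. -/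
def Vstar [Fintype S] (H : ℕ) (P : ℕ → S → B → S → ℝ) (R : ℕ → S → B → ℝ)
    (h : ℕ) (s : S) : ℝ :=
  ⨆ pol : ℕ → S → B, Vval H P R pol h s

/-- Optimal Q-function `Q*_h(s,b) = R_h(s,b) + Σ_{s'} P_h(s'|s,b) V*_{h+1}(s')`. -/
def Qstar [Fintype S] (H : ℕ) (P : ℕ → S → B → S → ℝ) (R : ℕ → S → B → ℝ)
    (h : ℕ) (s : S) (b : B) : ℝ :=
  R h s b + ∑ s' : S, P h s b s' * Vstar H P R (h + 1) s'

/-- Q-function of a policy with `k` remaining steps. -/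
def Qfuel [Fintype S] (P : ℕ → S → B → S → ℝ) (R : ℕ → S → B → ℝ)
    (pol : ℕ → S → B) : ℕ → ℕ → S → B → ℝ
  | _, 0, _, _ => 0
  | h, k + 1, s, b =>
      R h s b + ∑ s' : S, P h s b s' * Qfuel P R pol (h + 1) k s' (pol (h + 1) s')

/-- Q-function `Q^π_h(s,b)` of a policy with horizon `H` (`Q^π_{H+1} = 0`). -/
def Qval [Fintype S] (H : ℕ) (P : ℕ → S → B → S → ℝ) (R : ℕ → S → B → ℝ)
    (pol : ℕ → S → B) (h : ℕ) (s : S) (b : B) : ℝ :=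
  Qfuel P R pol h (H + 1 - h) s b

end

/-
Advice under the lower adherence `θ₂` is a mixture of advice under the higher adherence `θ₁`
and deferral: for `π(b) ≤ θ₂(b) ≤ θ₁(b)` the human's response to advising `b` under `θ₂` is
`λ · (response under θ₁) + (1 - λ) · π` with `λ = (θ₂(b) - π(b)) / (θ₁(b) - π(b)) ∈ [0, 1]`,
and deferral does not depend on the adherence. Hence every one-step lookahead value under `θ₂`
is at most the best one under `θ₁`, and backward induction on the Bellman recursion, which
computes the optimal value over deterministic Markov policies, propagates this to `V*`.
-/

open Finset

section FiniteHorizon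

variable {S B B' : Type*} [Fintype S]

def bellmanQ (P : ℕ → S → B → S → ℝ) (R : ℕ → S → B → ℝ) (V : S → ℝ) (h : ℕ) (s : S)
    (b : B) : ℝ :=
  R h s b + ∑ s' : S, P h s b s' * V s'

noncomputable def optValue [Fintype B] [Nonempty B] (P : ℕ → S → B → S → ℝ) (R : ℕ → S → B → ℝ) :
    ℕ → ℕ → S → ℝ
  | _, 0, _ => 0
  | h, k + 1, s => univ.sup' univ_nonempty (bellmanQ P R (optValue P R (h + 1) k) h s)

variable (P : ℕ → S → B → S → ℝ) (R : ℕ → S → B → ℝ)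

theorem Vfuel_succ (pol : ℕ → S → B) (h k : ℕ) (s : S) :
    Vfuel P R pol h (k + 1) s = bellmanQ P R (Vfuel P R pol (h + 1) k) h s (pol h s) :=
  rfl

theorem bellmanQ_mono {V W : S → ℝ} (hVW : V ≤ W) {h : ℕ} {s : S} {b : B}
    (hP : ∀ s', 0 ≤ P h s b s') : bellmanQ P R V h s b ≤ bellmanQ P R W h s b :=
  add_le_add_right (sum_le_sum fun s' _ => mul_le_mul_of_nonneg_left (hVW s') (hP s')) _

theorem Vfuel_congr {pol pol' : ℕ → S → B} (k : ℕ) {h : ℕ}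
    (hpol : ∀ h', h ≤ h' → pol h' = pol' h') : Vfuel P R pol h k = Vfuel P R pol' h k := by
  induction k generalizing h with
  | zero => rfl
  | succ k ih =>
    funext s
    rw [Vfuel_succ, Vfuel_succ, hpol h le_rfl, ih fun h' hh' => hpol h' (by omega)]

variable [Fintype B] [Nonempty B]

theorem Vfuel_le_optValue (pol : ℕ → S → B) (k : ℕ) {h : ℕ}
    (hP : ∀ h', h ≤ h' → h' < h + k → ∀ s b s', 0 ≤ P h' s b s') :
    Vfuel P R pol h k ≤ optValue P R h k := by
  induction k generalizing h with
  | zero => exact le_rfl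
  | succ k ih =>
    intro s
    calc Vfuel P R pol h (k + 1) s
        ≤ bellmanQ P R (optValue P R (h + 1) k) h s (pol h s) :=
          bellmanQ_mono P R (ih fun h' h₁ h₂ => hP h' (by omega) (by omega))
            (hP h le_rfl (by omega) s _)
      _ ≤ optValue P R h (k + 1) s := le_sup' _ (mem_univ _)

theorem exists_Vfuel_eq_optValue (k h : ℕ) :
    ∃ pol : ℕ → S → B, Vfuel P R pol h k = optValue P R h k := by
  induction k generalizing h with
  | zero => exact ⟨fun _ _ => Classical.arbitrary B, rfl⟩
  | succ k ih =>
    obtain ⟨pol, hpol⟩ := ih (h + 1)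
    choose greedy hgreedy using fun s =>
      exists_mem_eq_sup' univ_nonempty (bellmanQ P R (optValue P R (h + 1) k) h s)
    refine ⟨Function.update pol h greedy, funext fun s => ?_⟩
    have htail : Vfuel P R (Function.update pol h greedy) (h + 1) k = Vfuel P R pol (h + 1) k :=
      Vfuel_congr P R k fun h' hh' => Function.update_of_ne (by omega) _ _
    rw [Vfuel_succ, htail, hpol, Function.update_self]
    exact (hgreedy s).2.symm

theorem Vstar_eq_optValue (H : ℕ) {h : ℕ}
    (hP : ∀ h', h ≤ h' → h' ≤ H → ∀ s b s', 0 ≤ P h' s b s') (s : S) :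
    Vstar H P R h s = optValue P R h (H + 1 - h) s := by
  have hle : ∀ pol, Vval H P R pol h s ≤ optValue P R h (H + 1 - h) s := fun pol =>
    Vfuel_le_optValue P R pol _ (fun h' h₁ h₂ => hP h' h₁ (by omega)) s
  obtain ⟨pol, hpol⟩ := exists_Vfuel_eq_optValue P R (H + 1 - h) h
  refine le_antisymm (ciSup_le hle) ?_
  calc optValue P R h (H + 1 - h) s = Vval H P R pol h s := (congrFun hpol s).symm
    _ ≤ Vstar H P R h s := le_ciSup ⟨_, Set.forall_mem_range.2 hle⟩ pol

theorem optValue_le_optValue_of_bellmanQ_le [Fintype B'] [Nonempty B']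
    (P' : ℕ → S → B' → S → ℝ) (R' : ℕ → S → B' → ℝ) (k : ℕ) {h : ℕ}
    (hP' : ∀ h', h ≤ h' → h' < h + k → ∀ s b' s', 0 ≤ P' h' s b' s')
    (hdom : ∀ h', h ≤ h' → h' < h + k → ∀ s V b',
      bellmanQ P' R' V h' s b' ≤ univ.sup' univ_nonempty (bellmanQ P R V h' s)) :
    optValue P' R' h k ≤ optValue P R h k := by
  induction k generalizing h with
  | zero => exact le_rfl
  | succ k ih =>
    intro s
    refine sup'_le _ _ fun b' _ => ?_
    calc bellmanQ P' R' (optValue P' R' (h + 1) k) h s b'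
        ≤ bellmanQ P' R' (optValue P R (h + 1) k) h s b' :=
          bellmanQ_mono P' R'
            (ih (fun h' h₁ h₂ => hP' h' (by omega) (by omega))
              fun h' h₁ h₂ => hdom h' (by omega) (by omega))
            (hP' h le_rfl (by omega) s b')
      _ ≤ optValue P R h (k + 1) s := hdom h le_rfl (by omega) s _ b'

end FiniteHorizon

section Adherence

variable {S A : Type*} [DecidableEq A] (piH : ℕ → S → A → ℝ) (h : ℕ) (s : S)

theorem Pact_nonneg {θ : S → A → ℝ} (hθ : ∀ b, 0 ≤ θ s b ∧ θ s b ≤ 1)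
    (hpi : ∀ a, 0 ≤ piH h s a) (hpi_lt : ∀ a, piH h s a < 1) (aM : Option A) (a : A) :
    0 ≤ Pact piH θ h s aM a := by
  rcases aM with _ | b
  · exact hpi a
  · by_cases hab : a = b
    · simpa [Pact, hab] using (hθ b).1
    · simp only [Pact, if_neg hab]
      exact div_nonneg (mul_nonneg (by linarith [(hθ b).2]) (hpi a)) (by linarith [hpi_lt b])

theorem Pact_some_mem_segment {θ₁ θ₂ : S → A → ℝ} {b : A} (hpi_lt : piH h s b < 1)
    (hθ : θ₂ s b ≤ θ₁ s b) (hpi : piH h s b ≤ θ₂ s b) :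
    Pact piH θ₂ h s (some b) ∈ segment ℝ (Pact piH θ₁ h s none) (Pact piH θ₁ h s (some b)) := by
  rcases (hpi.trans hθ).eq_or_lt with heq | hlt
  · have : θ₂ s b = θ₁ s b := le_antisymm hθ (heq ▸ hpi)
    rw [show Pact piH θ₂ h s (some b) = Pact piH θ₁ h s (some b) by
      funext a; simp only [Pact, this]]
    exact right_mem_segment ℝ _ _
  set μ := (θ₂ s b - piH h s b) / (θ₁ s b - piH h s b)
  have hμ1 : μ ≤ 1 := (div_le_one (by linarith)).2 (by linarith)
  refine ⟨1 - μ, μ, by linarith, div_nonneg (by linarith) (by linarith), by ring,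
    funext fun a => ?_⟩
  have hd : θ₁ s b - piH h s b ≠ 0 := by linarith
  have hd' : 1 - piH h s b ≠ 0 := by linarith
  by_cases hab : a = b
  · subst hab
    simp only [Pact, Pi.add_apply, Pi.smul_apply, smul_eq_mul, ↓reduceIte, μ]
    field_simp
    ring
  · simp only [Pact, Pi.add_apply, Pi.smul_apply, smul_eq_mul, if_neg hab, μ]
    field_simp
    ring

variable [Fintype A] (p : ℕ → S → A → S → ℝ) (r : ℕ → S → A → ℝ)

theorem pM_nonneg {θ : S → A → ℝ} (hθ : ∀ b, 0 ≤ θ s b ∧ θ s b ≤ 1)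
    (hp : ∀ a s', 0 ≤ p h s a s') (hpi : ∀ a, 0 ≤ piH h s a) (hpi_lt : ∀ a, piH h s a < 1)
    (aM : Option A) (s' : S) : 0 ≤ pM p piH θ h s aM s' :=
  sum_nonneg fun a _ => mul_nonneg (hp a s') (Pact_nonneg piH h s hθ hpi hpi_lt aM a)

variable [Fintype S]

theorem bellmanQ_pM_rM (θ : S → A → ℝ) (V : S → ℝ) (aM : Option A) :
    bellmanQ (pM p piH θ) (rM r piH θ) V h s aM
      = ∑ a : A, Pact piH θ h s aM a * bellmanQ p r V h s a := by
  simp only [bellmanQ, pM, rM, sum_mul, mul_sum, mul_add, sum_add_distrib]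
  rw [sum_comm]
  congr 1 <;> refine sum_congr rfl fun _ _ => ?_
  · ring
  · exact sum_congr rfl fun _ _ => by ring

theorem bellmanQ_le_sup'_of_adherence_le {θ₁ θ₂ : S → A → ℝ} (hpi_lt : ∀ b, piH h s b < 1)
    (hθ : ∀ b, θ₂ s b ≤ θ₁ s b) (hpi : ∀ b, piH h s b ≤ θ₂ s b) (V : S → ℝ) (aM : Option A) :
    bellmanQ (pM p piH θ₂) (rM r piH θ₂) V h s aM
      ≤ univ.sup' univ_nonempty (bellmanQ (pM p piH θ₁) (rM r piH θ₁) V h s) := by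
  rcases aM with _ | b
  · exact le_sup' (bellmanQ (pM p piH θ₁) (rM r piH θ₁) V h s) (mem_univ none)
  obtain ⟨α, β, hα, hβ, hαβ, hmix⟩ := Pact_some_mem_segment piH h s (hpi_lt b) (hθ b) (hpi b)
  have hQ : bellmanQ (pM p piH θ₂) (rM r piH θ₂) V h s (some b)
      = α • bellmanQ (pM p piH θ₁) (rM r piH θ₁) V h s none
        + β • bellmanQ (pM p piH θ₁) (rM r piH θ₁) V h s (some b) := by
    simp only [bellmanQ_pM_rM, ← hmix, Pi.add_apply, Pi.smul_apply, smul_eq_mul, add_mul,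
      sum_add_distrib, mul_sum, mul_assoc]
  rw [hQ]
  exact (Convex.combo_le_max _ _ hα hβ hαβ).trans
    (max_le (le_sup' _ (mem_univ _)) (le_sup' _ (mem_univ _)))

end Adherence

theorem adherence_monotonicity_general
    {S A : Type*} [Fintype S] [Fintype A] [DecidableEq A]
    (H : ℕ)
    (p : ℕ → S → A → S → ℝ) (r : ℕ → S → A → ℝ) (piH : ℕ → S → A → ℝ)
    (hp : ∀ h, 1 ≤ h → h ≤ H → ∀ (s : S) (a : A),
      (∀ s' : S, 0 ≤ p h s a s') ∧ ∑ s' : S, p h s a s' = 1)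
    (hpiH : ∀ h, 1 ≤ h → h ≤ H → ∀ s : S,
      (∀ a : A, 0 ≤ piH h s a) ∧ ∑ a : A, piH h s a = 1)
    (hpiHlt : ∀ h, 1 ≤ h → h ≤ H → ∀ (s : S) (a : A), piH h s a < 1)
    (θ1 θ2 : S → A → ℝ)
    (hθ1 : ∀ (s : S) (a : A), 0 ≤ θ1 s a ∧ θ1 s a ≤ 1)
    (hθ2 : ∀ (s : S) (a : A), 0 ≤ θ2 s a ∧ θ2 s a ≤ 1)
    (hmono : ∀ (s : S) (a : A), θ2 s a ≤ θ1 s a)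
    (hadh : ∀ h, 1 ≤ h → h ≤ H → ∀ (s : S) (a : A), piH h s a ≤ θ2 s a) :
    ∀ (s : S) (h : ℕ), 1 ≤ h → h ≤ H →
      Vstar H (pM p piH θ2) (rM r piH θ2) h s ≤ Vstar H (pM p piH θ1) (rM r piH θ1) h s := by
  intro s h h₁ _
  have hpM : ∀ θ : S → A → ℝ, (∀ s a, 0 ≤ θ s a ∧ θ s a ≤ 1) →
      ∀ h', h ≤ h' → h' ≤ H → ∀ s aM s', 0 ≤ pM p piH θ h' s aM s' :=
    fun θ hθ h' hh' hh'H s =>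
      pM_nonneg piH h' s p (hθ s) (fun a => (hp h' (by omega) hh'H s a).1)
        (hpiH h' (by omega) hh'H s).1 (hpiHlt h' (by omega) hh'H s)
  rw [Vstar_eq_optValue _ _ H (hpM θ2 hθ2), Vstar_eq_optValue _ _ H (hpM θ1 hθ1)]
  refine optValue_le_optValue_of_bellmanQ_le _ _ _ _ _
    (fun h' hh' hh'H => hpM θ2 hθ2 h' hh' (by omega)) (fun h' hh' hh'H s => ?_) s
  exact bellmanQ_le_sup'_of_adherence_le piH h' s p r (hpiHlt h' (by omega) (by omega) s)
    (hmono s) (hadh h' (by omega) (by omega) s)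

/-- Proposition 2: monotonicity of the optimal human–machine value
in the adherence level. -/
theorem adherence_monotonicity
    {S A : Type*} [Fintype S] [Fintype A] [Nonempty S] [Nonempty A] [DecidableEq A]
    (H : ℕ) (hH : 1 ≤ H)
    (p : ℕ → S → A → S → ℝ) (r : ℕ → S → A → ℝ) (piH : ℕ → S → A → ℝ)
    (hp : ∀ h, 1 ≤ h → h ≤ H → ∀ (s : S) (a : A),
      (∀ s' : S, 0 ≤ p h s a s') ∧ ∑ s' : S, p h s a s' = 1)
    (hr : ∀ h, 1 ≤ h → h ≤ H → ∀ (s : S) (a : A), 0 ≤ r h s a ∧ r h s a ≤ 1)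
    (hpiH : ∀ h, 1 ≤ h → h ≤ H → ∀ s : S,
      (∀ a : A, 0 ≤ piH h s a) ∧ ∑ a : A, piH h s a = 1)
    (hpiHlt : ∀ h, 1 ≤ h → h ≤ H → ∀ (s : S) (a : A), piH h s a < 1)
    (θ1 θ2 : S → A → ℝ)
    (hθ1 : ∀ (s : S) (a : A), 0 ≤ θ1 s a ∧ θ1 s a ≤ 1)
    (hθ2 : ∀ (s : S) (a : A), 0 ≤ θ2 s a ∧ θ2 s a ≤ 1)
    (hmono : ∀ (s : S) (a : A), θ2 s a ≤ θ1 s a)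
    (hadh : ∀ h, 1 ≤ h → h ≤ H → ∀ (s : S) (a : A), piH h s a ≤ θ2 s a) :
    ∀ (s : S) (h : ℕ), 1 ≤ h → h ≤ H →
      Vstar H (pM p piH θ2) (rM r piH θ2) h s ≤ Vstar H (pM p piH θ1) (rM r piH θ1) h s :=
  adherence_monotonicity_general H p r piH hp hpiH hpiHlt θ1 θ2 hθ1 hθ2 hmono hadh
end

section
/- A β-penalized optimal policy is optimal for the advice-budget-constrained problem at its own budget: let β ≥ 0, s1 ∈ S, and let π̂ be a deterministic Markov policy maximizing V^π_{1,β}(s1) over all deterministic Markov policies. Then for every deterministic Markov policy π with N^π_1(s1) ≤ N^{π̂}_1(s1), one has V^π_1(s1) ≤ V^{π̂}_1(s1). -/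
open Finset

/-
Lagrangian duality in its simplest form: the penalized value of a policy is its value minus `β`
times its expected advice count, `V_β = V - β N`, by linearity of the value recursion in the
reward. Hence if `N^π ≤ N^π̂`, then `V^π = V^π_β + β N^π ≤ V^π̂_β + β N^π̂ = V^π̂`.
-/

section ValueLinearity

variable {S B : Type*} [Fintype S] (P : ℕ → S → B → S → ℝ) (R₁ R₂ : ℕ → S → B → ℝ) (β : ℝ)
  (pol : ℕ → S → B)

theorem Vfuel_sub_mul (h k : ℕ) (s : S) :
    Vfuel P (fun h s b => R₁ h s b - β * R₂ h s b) pol h k s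
      = Vfuel P R₁ pol h k s - β * Vfuel P R₂ pol h k s := by
  induction k generalizing h s with
  | zero => simp [Vfuel]
  | succ k ih =>
    have hpull : ∑ s', P h s (pol h s) s' * (β * Vfuel P R₂ pol (h + 1) k s')
        = β * ∑ s', P h s (pol h s) s' * Vfuel P R₂ pol (h + 1) k s' := by
      rw [Finset.mul_sum]
      exact Finset.sum_congr rfl fun _ _ => mul_left_comm _ _ _
    simp only [Vfuel, ih, mul_sub, Finset.sum_sub_distrib, hpull]
    ring

theorem Vval_sub_mul (H h : ℕ) (s : S) :
    Vval H P (fun h s b => R₁ h s b - β * R₂ h s b) pol h s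
      = Vval H P R₁ pol h s - β * Vval H P R₂ pol h s :=
  Vfuel_sub_mul P R₁ R₂ β pol h (H + 1 - h) s

end ValueLinearity

theorem penalized_optimal_is_budget_optimal_general
    {S A : Type*} [Fintype S] [Fintype A] [DecidableEq A]
    (H : ℕ)
    (p : ℕ → S → A → S → ℝ) (r : ℕ → S → A → ℝ) (piH : ℕ → S → A → ℝ)
    (θ : S → A → ℝ)
    (β : ℝ) (hβ : 0 ≤ β) (s1 : S)
    (pihat : ℕ → S → Option A)
    (hopt : ∀ pol : ℕ → S → Option A,
      Vval H (pM p piH θ) (rMpen r piH θ β) pol 1 s1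
        ≤ Vval H (pM p piH θ) (rMpen r piH θ β) pihat 1 s1) :
    ∀ pol : ℕ → S → Option A,
      Vval H (pM p piH θ) (fun _ _ aM => indAdv aM) pol 1 s1
          ≤ Vval H (pM p piH θ) (fun _ _ aM => indAdv aM) pihat 1 s1 →
      Vval H (pM p piH θ) (rM r piH θ) pol 1 s1
        ≤ Vval H (pM p piH θ) (rM r piH θ) pihat 1 s1 := by
  intro pol hbudget
  have hpen : ∀ q : ℕ → S → Option A,
      Vval H (pM p piH θ) (rMpen r piH θ β) q 1 s1
        = Vval H (pM p piH θ) (rM r piH θ) q 1 s1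
          - β * Vval H (pM p piH θ) (fun _ _ aM => indAdv aM) q 1 s1 :=
    fun q => Vval_sub_mul _ _ _ β q H 1 s1
  have hcompare := hopt pol
  rw [hpen, hpen] at hcompare
  linarith [mul_le_mul_of_nonneg_left hbudget hβ]

/-- a β-penalized optimal policy is optimal for the
advice-budget-constrained problem at its own budget. -/
theorem penalized_optimal_is_budget_optimal
    {S A : Type*} [Fintype S] [Fintype A] [Nonempty S] [Nonempty A] [DecidableEq A]
    (H : ℕ) (hH : 1 ≤ H)
    (p : ℕ → S → A → S → ℝ) (r : ℕ → S → A → ℝ) (piH : ℕ → S → A → ℝ)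
    (hp : ∀ h, 1 ≤ h → h ≤ H → ∀ (s : S) (a : A),
      (∀ s' : S, 0 ≤ p h s a s') ∧ ∑ s' : S, p h s a s' = 1)
    (hr : ∀ h, 1 ≤ h → h ≤ H → ∀ (s : S) (a : A), 0 ≤ r h s a ∧ r h s a ≤ 1)
    (hpiH : ∀ h, 1 ≤ h → h ≤ H → ∀ s : S,
      (∀ a : A, 0 ≤ piH h s a) ∧ ∑ a : A, piH h s a = 1)
    (hpiHlt : ∀ h, 1 ≤ h → h ≤ H → ∀ (s : S) (a : A), piH h s a < 1)
    (θ : S → A → ℝ) (hθ : ∀ (s : S) (a : A), 0 ≤ θ s a ∧ θ s a ≤ 1)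
    (β : ℝ) (hβ : 0 ≤ β) (s1 : S)
    (pihat : ℕ → S → Option A)
    (hopt : ∀ pol : ℕ → S → Option A,
      Vval H (pM p piH θ) (rMpen r piH θ β) pol 1 s1
        ≤ Vval H (pM p piH θ) (rMpen r piH θ β) pihat 1 s1) :
    ∀ pol : ℕ → S → Option A,
      Vval H (pM p piH θ) (fun _ _ aM => indAdv aM) pol 1 s1
          ≤ Vval H (pM p piH θ) (fun _ _ aM => indAdv aM) pihat 1 s1 →
      Vval H (pM p piH θ) (rM r piH θ) pol 1 s1
        ≤ Vval H (pM p piH θ) (rM r piH θ) pihat 1 s1 :=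
  penalized_optimal_is_budget_optimal_general H p r piH θ β hβ s1 pihat hopt
end

section
/- Affine dependence of the machine transition on the adherence level: for every h ∈ {1,…,H}, s, s' ∈ S and a ∈ A, setting ζ2 = (Σ_{a'≠a} p_h(s'|s,a')·π^H_h(a'|s))/(1−π^H_h(a|s)) and ζ1 = p_h(s'|s,a) − ζ2, the machine transition satisfies p^M_h(s'|s,a) = ζ1·θ(s,a) + ζ2. Consequently, if p̂^M denotes the machine transition built from the same environment kernel p and human policy π^H but with a different adherence level θ̄ : S×A → [0,1], then p^M_h(s'|s,a) − p̂^M_h(s'|s,a) = ζ1·(θ(s,a) − θ̄(s,a)); since ζ1 ∈ [−1,1], in particular |p^M_h(s'|s,a) − p̂^M_h(s'|s,a)| ≤ |θ(s,a) − θ̄(s,a)|. -/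
open Finset

/-!
Given advice `a`, the human plays `a` with probability `θ(s,a)` and otherwise draws an action
from `π^H_h(·|s)` conditioned on being different from `a`. Hence `p^M_h(s'|s,a)` is the mixture
`θ · p_h(s'|s,a) + (1 - θ) · ζ₂`, where `ζ₂` is the transition probability under that conditioned
draw. Since `p_h(s'|s,a)` and `ζ₂` both lie in `[0,1]`, their difference `ζ₁` lies in `[-1,1]`.
-/

theorem Finset.sum_mul_div_sum_mem_Icc {ι : Type*} (t : Finset ι) {f w : ι → ℝ}
    (hf : ∀ i ∈ t, f i ∈ Set.Icc 0 1) (hw : ∀ i ∈ t, 0 ≤ w i) :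
    (∑ i ∈ t, f i * w i) / ∑ i ∈ t, w i ∈ Set.Icc 0 1 := by
  have hden : 0 ≤ ∑ i ∈ t, w i := sum_nonneg hw
  refine ⟨div_nonneg (sum_nonneg fun i hi => mul_nonneg (hf i hi).1 (hw i hi)) hden,
    div_le_one_of_le₀ (sum_le_sum fun i hi => ?_) hden⟩
  exact mul_le_of_le_one_left (hw i hi) (hf i hi).2

section AdviceFollowing

variable {S A : Type*} [Fintype A] [DecidableEq A]

/-- The paper's `ζ₂`. When `π^H_h(a|s) = 1` it is `0` by division by zero, and so is the
corresponding summand of `Pact`, which keeps `pM_some` unconditional. -/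
noncomputable def pDeviate (p : ℕ → S → A → S → ℝ) (piH : ℕ → S → A → ℝ) (h : ℕ) (s : S)
    (a : A) (s' : S) : ℝ :=
  (∑ a' ∈ univ.erase a, p h s a' s' * piH h s a') / (1 - piH h s a)

variable (p : ℕ → S → A → S → ℝ) (piH : ℕ → S → A → ℝ) (h : ℕ) (s s' : S) (a : A)

theorem pM_some (τ : S → A → ℝ) :
    pM p piH τ h s (some a) s' = τ s a * p h s a s' + (1 - τ s a) * pDeviate p piH h s a s' := by
  have hdeviate : ∀ a' ∈ univ.erase a, p h s a' s' * Pact piH τ h s (some a) a' =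
      (1 - τ s a) / (1 - piH h s a) * (p h s a' s' * piH h s a') := by
    intro a' ha'
    rw [Pact, if_neg (ne_of_mem_erase ha')]
    ring
  rw [pM, ← add_sum_erase _ _ (mem_univ a), sum_congr rfl hdeviate, ← mul_sum, pDeviate, Pact,
    if_pos rfl]
  ring

theorem pM_some_eq_affine (τ : S → A → ℝ) :
    pM p piH τ h s (some a) s' =
      (p h s a s' - pDeviate p piH h s a s') * τ s a + pDeviate p piH h s a s' := by
  rw [pM_some]
  ring

theorem pM_some_sub_pM_some (θ θbar : S → A → ℝ) :
    pM p piH θ h s (some a) s' - pM p piH θbar h s (some a) s' =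
      (p h s a s' - pDeviate p piH h s a s') * (θ s a - θbar s a) := by
  rw [pM_some_eq_affine, pM_some_eq_affine]
  ring

variable {p piH h s s'}

theorem pDeviate_mem_Icc (hp : ∀ a', p h s a' s' ∈ Set.Icc 0 1) (hpiH : ∀ a', 0 ≤ piH h s a')
    (hpiH_sum : ∑ a', piH h s a' = 1) : pDeviate p piH h s a s' ∈ Set.Icc 0 1 := by
  have hden : 1 - piH h s a = ∑ a' ∈ univ.erase a, piH h s a' := by
    rw [sum_erase_eq_sub (mem_univ a), hpiH_sum]
  rw [pDeviate, hden]
  exact sum_mul_div_sum_mem_Icc _ (fun a' _ => hp a') (fun a' _ => hpiH a')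

theorem abs_sub_pDeviate_le_one (hp : ∀ a', p h s a' s' ∈ Set.Icc 0 1)
    (hpiH : ∀ a', 0 ≤ piH h s a') (hpiH_sum : ∑ a', piH h s a' = 1) :
    |p h s a s' - pDeviate p piH h s a s'| ≤ 1 :=
  have hdev := pDeviate_mem_Icc a hp hpiH hpiH_sum
  abs_sub_le_of_nonneg_of_le (hp a).1 (hp a).2 hdev.1 hdev.2

end AdviceFollowing

theorem machine_transition_affine_in_adherence_general
    {S A : Type*} [Fintype S] [Fintype A] [DecidableEq A]
    (H : ℕ)
    (p : ℕ → S → A → S → ℝ) (piH : ℕ → S → A → ℝ)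
    (hp : ∀ h, 1 ≤ h → h ≤ H → ∀ (s : S) (a : A),
      (∀ s' : S, 0 ≤ p h s a s') ∧ ∑ s' : S, p h s a s' = 1)
    (hpiH : ∀ h, 1 ≤ h → h ≤ H → ∀ s : S,
      (∀ a : A, 0 ≤ piH h s a) ∧ ∑ a : A, piH h s a = 1)
    (θ θbar : S → A → ℝ) :
    ∀ h, 1 ≤ h → h ≤ H → ∀ (s s' : S) (a : A),
      let ζ2 : ℝ := (∑ a' ∈ Finset.univ.erase a, p h s a' s' * piH h s a') / (1 - piH h s a)
      let ζ1 : ℝ := p h s a s' - ζ2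
      pM p piH θ h s (Option.some a) s' = ζ1 * θ s a + ζ2 ∧
      pM p piH θ h s (Option.some a) s' - pM p piH θbar h s (Option.some a) s'
        = ζ1 * (θ s a - θbar s a) ∧
      |pM p piH θ h s (Option.some a) s' - pM p piH θbar h s (Option.some a) s'|
        ≤ |θ s a - θbar s a| := by
  intro h h1 h2 s s' a
  have hp_mem : ∀ a', p h s a' s' ∈ Set.Icc 0 1 := fun a' =>
    ⟨(hp h h1 h2 s a').1 s', (hp h h1 h2 s a').2 ▸
      single_le_sum (fun t _ => (hp h h1 h2 s a').1 t) (mem_univ s')⟩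
  obtain ⟨hpiH_nonneg, hpiH_sum⟩ := hpiH h h1 h2 s
  refine ⟨pM_some_eq_affine p piH h s s' a θ, pM_some_sub_pM_some p piH h s s' a θ θbar, ?_⟩
  rw [pM_some_sub_pM_some, abs_mul]
  exact mul_le_of_le_one_left (abs_nonneg _)
    (abs_sub_pDeviate_le_one a hp_mem hpiH_nonneg hpiH_sum)

/-- affine dependence of the machine transition on the adherence
level. -/
theorem machine_transition_affine_in_adherence
    {S A : Type*} [Fintype S] [Fintype A] [Nonempty S] [Nonempty A] [DecidableEq A]
    (H : ℕ) (hH : 1 ≤ H)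
    (p : ℕ → S → A → S → ℝ) (piH : ℕ → S → A → ℝ)
    (hp : ∀ h, 1 ≤ h → h ≤ H → ∀ (s : S) (a : A),
      (∀ s' : S, 0 ≤ p h s a s') ∧ ∑ s' : S, p h s a s' = 1)
    (hpiH : ∀ h, 1 ≤ h → h ≤ H → ∀ s : S,
      (∀ a : A, 0 ≤ piH h s a) ∧ ∑ a : A, piH h s a = 1)
    (hpiHlt : ∀ h, 1 ≤ h → h ≤ H → ∀ (s : S) (a : A), piH h s a < 1)
    (θ θbar : S → A → ℝ)
    (hθ : ∀ (s : S) (a : A), 0 ≤ θ s a ∧ θ s a ≤ 1)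
    (hθbar : ∀ (s : S) (a : A), 0 ≤ θbar s a ∧ θbar s a ≤ 1) :
    ∀ h, 1 ≤ h → h ≤ H → ∀ (s s' : S) (a : A),
      let ζ2 : ℝ := (∑ a' ∈ Finset.univ.erase a, p h s a' s' * piH h s a') / (1 - piH h s a)
      let ζ1 : ℝ := p h s a s' - ζ2
      pM p piH θ h s (Option.some a) s' = ζ1 * θ s a + ζ2 ∧
      pM p piH θ h s (Option.some a) s' - pM p piH θbar h s (Option.some a) s'
        = ζ1 * (θ s a - θbar s a) ∧
      |pM p piH θ h s (Option.some a) s' - pM p piH θbar h s (Option.some a) s'|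
        ≤ |θ s a - θbar s a| :=
  machine_transition_affine_in_adherence_general H p piH hp hpiH θ θbar
end

section
/- Variance-domination inequality: let ζ1, ζ2, θ ∈ ℝ satisfy ζ2 ∈ [0,1], ζ1 + ζ2 ∈ [0,1], ζ1 ∈ [−1,1] and θ ∈ [0,1]. Then |ζ1|·θ·(1−θ) ≤ (ζ1·θ + ζ2)·(1 − ζ1·θ − ζ2). Equivalently: for all q0, q1, θ ∈ [0,1], setting p = θ·q1 + (1−θ)·q0, one has |q1 − q0|·θ·(1−θ) ≤ p·(1−p). -/
/-!
With `p = t * q1 + (1 - t) * q0`, the identity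
`p * (1 - p) - (q1 - q0) * t * (1 - t)
  = t² q1 (1 - q1) + (1 - t)² q0 (1 - q0) + 2 t (1 - t) q0 (1 - q1)`
writes the gap as a sum of nonnegative terms when `q0, q1, t ∈ [0, 1]`. Exchanging
`q0 ↔ q1` and `t ↔ 1 - t` fixes `p` and flips the sign of `q1 - q0`, which gives the bound
with `|q1 - q0|`; the `ζ`-form is the case `q0 = ζ2`, `q1 = ζ1 + ζ2`, `t = θ`.
-/

lemma sub_mul_mul_one_sub_le_variance_mix {q0 q1 t : ℝ} (hq0 : 0 ≤ q0) (hq0' : q0 ≤ 1)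
    (hq1 : 0 ≤ q1) (hq1' : q1 ≤ 1) (ht : 0 ≤ t) (ht' : t ≤ 1) :
    (q1 - q0) * t * (1 - t)
      ≤ (t * q1 + (1 - t) * q0) * (1 - (t * q1 + (1 - t) * q0)) := by
  have gap : (t * q1 + (1 - t) * q0) * (1 - (t * q1 + (1 - t) * q0)) - (q1 - q0) * t * (1 - t)
      = t ^ 2 * (q1 * (1 - q1)) + (1 - t) ^ 2 * (q0 * (1 - q0))
        + 2 * (t * (1 - t)) * (q0 * (1 - q1)) := by ring
  have hq0v : 0 ≤ q0 * (1 - q0) := mul_nonneg hq0 (sub_nonneg.2 hq0')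
  have hq1v : 0 ≤ q1 * (1 - q1) := mul_nonneg hq1 (sub_nonneg.2 hq1')
  have htv : 0 ≤ t * (1 - t) := mul_nonneg ht (sub_nonneg.2 ht')
  have hcross : 0 ≤ q0 * (1 - q1) := mul_nonneg hq0 (sub_nonneg.2 hq1')
  rw [← sub_nonneg, gap]
  positivity

lemma abs_sub_mul_mul_one_sub_le_variance_mix {q0 q1 t : ℝ} (hq0 : 0 ≤ q0) (hq0' : q0 ≤ 1)
    (hq1 : 0 ≤ q1) (hq1' : q1 ≤ 1) (ht : 0 ≤ t) (ht' : t ≤ 1) :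
    |q1 - q0| * t * (1 - t)
      ≤ (t * q1 + (1 - t) * q0) * (1 - (t * q1 + (1 - t) * q0)) := by
  rcases abs_cases (q1 - q0) with ⟨habs, -⟩ | ⟨habs, -⟩ <;> rw [habs]
  · exact sub_mul_mul_one_sub_le_variance_mix hq0 hq0' hq1 hq1' ht ht'
  · have swapped := sub_mul_mul_one_sub_le_variance_mix hq1 hq1' hq0 hq0'
      (sub_nonneg.2 ht') (sub_le_self 1 ht)
    convert swapped using 1 <;> ring

theorem variance_domination_general
    (ζ1 ζ2 θ : ℝ)
    (hζ2l : 0 ≤ ζ2) (hζ2u : ζ2 ≤ 1)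
    (hsuml : 0 ≤ ζ1 + ζ2) (hsumu : ζ1 + ζ2 ≤ 1)
    (hθl : 0 ≤ θ) (hθu : θ ≤ 1) :
    |ζ1| * θ * (1 - θ) ≤ (ζ1 * θ + ζ2) * (1 - ζ1 * θ - ζ2) ∧
    ∀ q0 q1 t : ℝ, 0 ≤ q0 → q0 ≤ 1 → 0 ≤ q1 → q1 ≤ 1 → 0 ≤ t → t ≤ 1 →
      |q1 - q0| * t * (1 - t)
        ≤ (t * q1 + (1 - t) * q0) * (1 - (t * q1 + (1 - t) * q0)) := by
  refine ⟨?_, fun q0 q1 t => abs_sub_mul_mul_one_sub_le_variance_mix⟩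
  have h := abs_sub_mul_mul_one_sub_le_variance_mix hζ2l hζ2u hsuml hsumu hθl hθu
  rw [add_sub_cancel_right] at h
  convert h using 2 <;> ring

/-- (variance-domination inequality), together with its equivalent
convex-combination form. -/
theorem variance_domination
    (ζ1 ζ2 θ : ℝ)
    (hζ2l : 0 ≤ ζ2) (hζ2u : ζ2 ≤ 1)
    (hsuml : 0 ≤ ζ1 + ζ2) (hsumu : ζ1 + ζ2 ≤ 1)
    (hζ1l : -1 ≤ ζ1) (hζ1u : ζ1 ≤ 1)
    (hθl : 0 ≤ θ) (hθu : θ ≤ 1) :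
    |ζ1| * θ * (1 - θ) ≤ (ζ1 * θ + ζ2) * (1 - ζ1 * θ - ζ2) ∧
    ∀ q0 q1 t : ℝ, 0 ≤ q0 → q0 ≤ 1 → 0 ≤ q1 → q1 ≤ 1 → 0 ≤ t → t ≤ 1 →
      |q1 - q0| * t * (1 - t)
        ≤ (t * q1 + (1 - t) * q0) * (1 - (t * q1 + (1 - t) * q0)) :=
  variance_domination_general ζ1 ζ2 θ hζ2l hζ2u hsuml hsumu hθl hθu
end

section
/- Bernstein-type transfer from adherence estimation error to machine-transition estimation error: let θ, θ̄ : S×A → [0,1] be two adherence levels and let p^M and p̂^M be the machine transition kernels built from the same environment kernel p and human policy π^H with adherence levels θ and θ̄, respectively. Fix (s,a) ∈ S×A, h ∈ {1,…,H}, a real L ≥ 0 and an integer n ≥ 2, and suppose |θ(s,a) − θ̄(s,a)| ≤ sqrt(8·θ̄(s,a)·(1−θ̄(s,a))·L/n) + 26·L/(3n−3). Then for every s' ∈ S, |p^M_h(s'|s,a) − p̂^M_h(s'|s,a)| ≤ sqrt(8·p̂^M_h(s'|s,a)·(1−p̂^M_h(s'|s,a))·L/n) + 26·L/(3n−3). 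-/
open Finset

/-!
Advising `a` makes the next-state law the two-point mixture `θ(s,a)·x + (1 − θ(s,a))·c`, where
`x = p_h(s'|s,a)` and `c = pReject p piH h s a s'` is the probability of reaching `s'` when the
human overrides the advice.
Both kernels share `x` and `c`, so their gap is `(θ − θ̄)(x − c)` with `|x − c| ≤ 1`, and by the
law of total variance the Bernoulli variance `q(1 − q)` of the mixture `q = p̂^M_h(s'|s,a)`
dominates `θ̄(1 − θ̄)(x − c)²`. Multiplying the hypothesis by `|x − c|` gives the claim.
-/

noncomputable def pReject {S A : Type*} [Fintype A] [DecidableEq A] (p : ℕ → S → A → S → ℝ)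
    (piH : ℕ → S → A → ℝ) (h : ℕ) (s : S) (a : A) (s' : S) : ℝ :=
  ∑ a' ∈ univ.erase a, piH h s a' / (1 - piH h s a) * p h s a' s'

theorem pM_some_eq {S A : Type*} [Fintype A] [DecidableEq A] (p : ℕ → S → A → S → ℝ)
    (piH : ℕ → S → A → ℝ) (θ : S → A → ℝ) (h : ℕ) (s : S) (a : A) (s' : S) :
    pM p piH θ h s (some a) s' = θ s a * p h s a s' + (1 - θ s a) * pReject p piH h s a s' := by
  rw [pM, ← add_sum_erase _ _ (mem_univ a), pReject, mul_sum]
  congr 1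
  · simp [Pact, mul_comm]
  · refine sum_congr rfl fun a' ha' => ?_
    simp only [Pact, if_neg (ne_of_mem_erase ha')]
    ring

theorem mem_Icc_of_sum_eq_one {ι : Type*} [Fintype ι] {f : ι → ℝ} (hf : ∀ i, 0 ≤ f i)
    (hsum : ∑ i, f i = 1) (i : ι) : f i ∈ Set.Icc 0 1 :=
  ⟨hf i, hsum ▸ single_le_sum (fun j _ => hf j) (mem_univ i)⟩

theorem pReject_mem_Icc {S A : Type*} [Fintype A] [DecidableEq A] {p : ℕ → S → A → S → ℝ}
    {piH : ℕ → S → A → ℝ} {h : ℕ} {s : S} {a : A} {s' : S}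
    (hp : ∀ a', p h s a' s' ∈ Set.Icc 0 1) (hπ : ∀ a', 0 ≤ piH h s a')
    (hπsum : ∑ a', piH h s a' = 1) (hπa : piH h s a < 1) :
    pReject p piH h s a s' ∈ Set.Icc 0 1 := by
  have hpos : 0 < 1 - piH h s a := sub_pos.mpr hπa
  have hweights : ∑ a' ∈ univ.erase a, piH h s a' / (1 - piH h s a) = 1 := by
    rw [← sum_div, sum_erase_eq_sub (mem_univ a), hπsum, div_self hpos.ne']
  exact (convex_Icc 0 1).sum_mem (fun a' _ => div_nonneg (hπ a') hpos.le) hweights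
    fun a' _ => hp a'

/-- Law of total variance for a two-component Bernoulli mixture. -/
theorem mul_one_sub_mul_sub_sq_le {t x c : ℝ} (ht : t ∈ Set.Icc 0 1) (hx : x ∈ Set.Icc 0 1)
    (hc : c ∈ Set.Icc 0 1) :
    t * (1 - t) * (x - c) ^ 2 ≤ (t * x + (1 - t) * c) * (1 - (t * x + (1 - t) * c)) := by
  obtain ⟨ht0, ht1⟩ := ht
  obtain ⟨hx0, hx1⟩ := hx
  obtain ⟨hc0, hc1⟩ := hc
  have hgap : 0 ≤ t * (x * (1 - x)) + (1 - t) * (c * (1 - c)) := by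
    have := sub_nonneg.mpr ht1
    have := sub_nonneg.mpr hx1
    have := sub_nonneg.mpr hc1
    positivity
  have hsplit : (t * x + (1 - t) * c) * (1 - (t * x + (1 - t) * c))
      = t * (1 - t) * (x - c) ^ 2 + (t * (x * (1 - x)) + (1 - t) * (c * (1 - c))) := by ring
  linarith

theorem abs_mul_le_sqrt_add {e d v w K C : ℝ} (hK : 0 ≤ K) (hC : 0 ≤ C) (hd : |d| ≤ 1)
    (hvw : v * d ^ 2 ≤ w) (he : |e| ≤ √(v * K) + C) : |e * d| ≤ √(w * K) + C := by
  have hsqrt : √(v * K) * |d| ≤ √(w * K) := by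
    rw [← Real.sqrt_sq_eq_abs, ← Real.sqrt_mul' _ (sq_nonneg d)]
    exact Real.sqrt_le_sqrt (by nlinarith)
  calc |e * d| = |e| * |d| := abs_mul e d
    _ ≤ (√(v * K) + C) * |d| := mul_le_mul_of_nonneg_right he (abs_nonneg d)
    _ = √(v * K) * |d| + C * |d| := add_mul _ _ _
    _ ≤ √(w * K) + C := add_le_add hsqrt (mul_le_of_le_one_right hC hd)

theorem bernstein_transfer_general
    {S A : Type*} [Fintype S] [Fintype A] [DecidableEq A]
    (H : ℕ)
    (p : ℕ → S → A → S → ℝ) (piH : ℕ → S → A → ℝ)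
    (hp : ∀ h, 1 ≤ h → h ≤ H → ∀ (s : S) (a : A),
      (∀ s' : S, 0 ≤ p h s a s') ∧ ∑ s' : S, p h s a s' = 1)
    (hpiH : ∀ h, 1 ≤ h → h ≤ H → ∀ s : S,
      (∀ a : A, 0 ≤ piH h s a) ∧ ∑ a : A, piH h s a = 1)
    (hpiHlt : ∀ h, 1 ≤ h → h ≤ H → ∀ (s : S) (a : A), piH h s a < 1)
    (θ θbar : S → A → ℝ)
    (hθbar : ∀ (s : S) (a : A), 0 ≤ θbar s a ∧ θbar s a ≤ 1)
    (s : S) (a : A) (h : ℕ) (hh1 : 1 ≤ h) (hh2 : h ≤ H)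
    (L : ℝ) (hL : 0 ≤ L) (n : ℕ) (hn : 2 ≤ n)
    (hest : |θ s a - θbar s a|
      ≤ Real.sqrt (8 * θbar s a * (1 - θbar s a) * L / n) + 26 * L / (3 * (n : ℝ) - 3)) :
    ∀ s' : S,
      |pM p piH θ h s (Option.some a) s' - pM p piH θbar h s (Option.some a) s'|
        ≤ Real.sqrt (8 * pM p piH θbar h s (Option.some a) s'
              * (1 - pM p piH θbar h s (Option.some a) s') * L / n)
          + 26 * L / (3 * (n : ℝ) - 3) := by
  intro s'
  have hpIcc : ∀ a', p h s a' s' ∈ Set.Icc 0 1 := fun a' =>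
    mem_Icc_of_sum_eq_one (hp h hh1 hh2 s a').1 (hp h hh1 hh2 s a').2 s'
  obtain ⟨hπ, hπsum⟩ := hpiH h hh1 hh2 s
  have hc := pReject_mem_Icc hpIcc hπ hπsum (hpiHlt h hh1 hh2 s a)
  have hn' : (2 : ℝ) ≤ n := by exact_mod_cast hn
  have hK : ∀ u v : ℝ, 8 * u * v * L / n = u * v * (8 * L / n) := fun _ _ => by ring
  rw [hK] at hest
  have hmix_sub : ∀ t t' x c : ℝ,
      t * x + (1 - t) * c - (t' * x + (1 - t') * c) = (t - t') * (x - c) :=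
    fun _ _ _ _ => by ring
  rw [pM_some_eq, pM_some_eq, hK, hmix_sub]
  refine abs_mul_le_sqrt_add (by positivity) (div_nonneg (by positivity) (by linarith))
    ?_ (mul_one_sub_mul_sub_sq_le (hθbar s a) (hpIcc a) hc) hest
  exact abs_sub_le_of_nonneg_of_le (hpIcc a).1 (hpIcc a).2 hc.1 hc.2

/-- Bernstein-type transfer from adherence estimation error to
machine-transition estimation error. -/
theorem bernstein_transfer
    {S A : Type*} [Fintype S] [Fintype A] [Nonempty S] [Nonempty A] [DecidableEq A]
    (H : ℕ) (hH : 1 ≤ H)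
    (p : ℕ → S → A → S → ℝ) (piH : ℕ → S → A → ℝ)
    (hp : ∀ h, 1 ≤ h → h ≤ H → ∀ (s : S) (a : A),
      (∀ s' : S, 0 ≤ p h s a s') ∧ ∑ s' : S, p h s a s' = 1)
    (hpiH : ∀ h, 1 ≤ h → h ≤ H → ∀ s : S,
      (∀ a : A, 0 ≤ piH h s a) ∧ ∑ a : A, piH h s a = 1)
    (hpiHlt : ∀ h, 1 ≤ h → h ≤ H → ∀ (s : S) (a : A), piH h s a < 1)
    (θ θbar : S → A → ℝ)
    (hθ : ∀ (s : S) (a : A), 0 ≤ θ s a ∧ θ s a ≤ 1)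
    (hθbar : ∀ (s : S) (a : A), 0 ≤ θbar s a ∧ θbar s a ≤ 1)
    (s : S) (a : A) (h : ℕ) (hh1 : 1 ≤ h) (hh2 : h ≤ H)
    (L : ℝ) (hL : 0 ≤ L) (n : ℕ) (hn : 2 ≤ n)
    (hest : |θ s a - θbar s a|
      ≤ Real.sqrt (8 * θbar s a * (1 - θbar s a) * L / n) + 26 * L / (3 * (n : ℝ) - 3)) :
    ∀ s' : S,
      |pM p piH θ h s (Option.some a) s' - pM p piH θbar h s (Option.some a) s'|
        ≤ Real.sqrt (8 * pM p piH θbar h s (Option.some a) s'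
              * (1 - pM p piH θbar h s (Option.some a) s') * L / n)
          + 26 * L / (3 * (n : ℝ) - 3) :=
  bernstein_transfer_general H p piH hp hpiH hpiHlt θ θbar hθbar s a h hh1 hh2 L hL n hn hest
end
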